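/- Substitution theorem for R-expressions (Theorem 1): Let S and T be R-expressions, let U_S be an R-expression containing a designated occurrence of S as an R-subformula, and let U_T be the result of replacing that occurrence of S by T. Then from the four R-expressions constituting S ⇔ˢ T (namely S ⇒ T, T ⇒ S, −S ⇒ −T, −T ⇒ −S) taken as premises, each of the four R-expressions constituting U_S ⇔ˢ U_T is derivable in SC∞; i.e., S ⇔ˢ T ⊢ U_S ⇔ˢ U_T. -/

import Mathlib

/-- Formulas of the connexive logic C: propositional variables, strong
negation `∼`, conjunction, disjunction and implication. -/
inductive Formula : Type
  | var : Nat → Formula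
  | snot : Formula → Formula
  | and : Formula → Formula → Formula
  | or : Formula → Formula → Formula
  | imp : Formula → Formula → Formula
deriving DecidableEq

/-- R-expressions over the language of C.  `fm A` is the formula `A`,
`negFm A` is `−A`, `seq Δ S` is `(Δ ⇒ S)` and `negSeq Δ S` is `−(Δ ⇒ S)`.
The convention `−−S = S` is implemented by the involution `rneg`. -/
inductive RExpr : Type
  | fm : Formula → RExpr
  | negFm : Formula → RExpr
  | seq : List RExpr → RExpr → RExpr
  | negSeq : List RExpr → RExpr → RExpr

/-- The refutation `−S` of an R-expression, with `−−S = S`. -/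
def rneg : RExpr → RExpr
  | .fm A => .negFm A
  | .negFm A => .fm A
  | .seq Δ S => .negSeq Δ S
  | .negSeq Δ S => .seq Δ S

/-- Derivability in the higher-order sequent calculus `SC∞` from a set `P`
of R-expressions taken as additional premises. -/
inductive SC (P : Set RExpr) : RExpr → Prop
  | prem {S} : S ∈ P → SC P S
  | rf (S) : SC P (.seq [S] S)
  | wl {Δ S} (T) : SC P (.seq Δ S) → SC P (.seq (Δ ++ [T]) S)
  | pl {U} (Δ S T Γ) : SC P (.seq (Δ ++ S :: T :: Γ) U) → SC P (.seq (Δ ++ T :: S :: Γ) U)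
  | cl {Δ S T} : SC P (.seq (Δ ++ [S, S]) T) → SC P (.seq (Δ ++ [S]) T)
  | cut {Δ S T} : SC P (.seq Δ S) → SC P (.seq (Δ ++ [S]) T) → SC P (.seq Δ T)
  | riP {Γ Δ S} : SC P (.seq (Γ ++ Δ) S) → SC P (.seq Γ (.seq Δ S))
  | liP {Γ Δ S T} : (∀ U ∈ Δ, SC P (.seq Γ U)) → SC P (.seq (Γ ++ [S]) T) →
      SC P (.seq (Γ ++ [.seq Δ S]) T)
  | riN {Δ Γ S} : SC P (.seq (Δ ++ Γ) (rneg S)) → SC P (.seq Δ (rneg (.seq Γ S)))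
  | riN' {Δ Γ S} : SC P (.seq Δ (rneg (.seq Γ S))) → SC P (.seq (Δ ++ Γ) (rneg S))
  | liN {Δ Γ S T} : (∀ U ∈ Γ, SC P (.seq Δ U)) → SC P (.seq (Δ ++ [rneg S]) T) →
      SC P (.seq (Δ ++ [rneg (.seq Γ S)]) T)
  | snotL {Δ A S} : SC P (.seq (Δ ++ [.negFm A]) S) → SC P (.seq (Δ ++ [.fm (.snot A)]) S)
  | snotR {Δ A} : SC P (.seq Δ (.negFm A)) → SC P (.seq Δ (.fm (.snot A)))
  | snotLm {Δ A S} : SC P (.seq (Δ ++ [.fm A]) S) → SC P (.seq (Δ ++ [.negFm (.snot A)]) S)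
  | snotRm {Δ A} : SC P (.seq Δ (.fm A)) → SC P (.seq Δ (.negFm (.snot A)))
  | andL {Δ A B S} : SC P (.seq (Δ ++ [.fm A, .fm B]) S) → SC P (.seq (Δ ++ [.fm (.and A B)]) S)
  | andR {Δ A B} : SC P (.seq Δ (.fm A)) → SC P (.seq Δ (.fm B)) → SC P (.seq Δ (.fm (.and A B)))
  | andLm {Δ A B S} : SC P (.seq (Δ ++ [.negFm A]) S) → SC P (.seq (Δ ++ [.negFm B]) S) →
      SC P (.seq (Δ ++ [.negFm (.and A B)]) S)
  | andRm₁ {Δ A B} : SC P (.seq Δ (.negFm A)) → SC P (.seq Δ (.negFm (.and A B)))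
  | andRm₂ {Δ A B} : SC P (.seq Δ (.negFm B)) → SC P (.seq Δ (.negFm (.and A B)))
  | orL {Δ A B S} : SC P (.seq (Δ ++ [.fm A]) S) → SC P (.seq (Δ ++ [.fm B]) S) →
      SC P (.seq (Δ ++ [.fm (.or A B)]) S)
  | orR₁ {Δ A B} : SC P (.seq Δ (.fm A)) → SC P (.seq Δ (.fm (.or A B)))
  | orR₂ {Δ A B} : SC P (.seq Δ (.fm B)) → SC P (.seq Δ (.fm (.or A B)))
  | orLm {Δ A B S} : SC P (.seq (Δ ++ [.negFm A, .negFm B]) S) →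
      SC P (.seq (Δ ++ [.negFm (.or A B)]) S)
  | orRm {Δ A B} : SC P (.seq Δ (.negFm A)) → SC P (.seq Δ (.negFm B)) →
      SC P (.seq Δ (.negFm (.or A B)))
  | impL {Δ A B S} : SC P (.seq (Δ ++ [.seq [.fm A] (.fm B)]) S) →
      SC P (.seq (Δ ++ [.fm (.imp A B)]) S)
  | impR {Δ A B} : SC P (.seq Δ (.seq [.fm A] (.fm B))) → SC P (.seq Δ (.fm (.imp A B)))
  | impLm {Δ A B S} : SC P (.seq (Δ ++ [.negSeq [.fm A] (.fm B)]) S) →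
      SC P (.seq (Δ ++ [.negFm (.imp A B)]) S)
  | impRm {Δ A B} : SC P (.seq Δ (.negSeq [.fm A] (.fm B))) → SC P (.seq Δ (.negFm (.imp A B)))

/-- `S ⇔ˢ T` relative to the premise set `P`: the four R-expressions
`S ⇒ T`, `T ⇒ S`, `−S ⇒ −T`, `−T ⇒ −S` are each derivable from `P`. -/
def StrictEquiv (P : Set RExpr) (S T : RExpr) : Prop :=
  SC P (.seq [S] T) ∧ SC P (.seq [T] S) ∧
  SC P (.seq [rneg S] (rneg T)) ∧ SC P (.seq [rneg T] (rneg S))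

/-- The four R-expressions constituting `S ⇔ˢ T`, taken as premises. -/
def equivPrems (S T : RExpr) : Set RExpr :=
  {RExpr.seq [S] T, RExpr.seq [T] S, RExpr.seq [rneg S] (rneg T), RExpr.seq [rneg T] (rneg S)}
/-- `Repl S T U V`: `U` contains a designated occurrence of `S` as an
R-subformula, and `V` is the result of replacing that occurrence by `T`. -/
inductive Repl (S T : RExpr) : RExpr → RExpr → Prop
  | here : Repl S T S T
  | neg {U V} : Repl S T U V → Repl S T (rneg U) (rneg V)
  | seqSucc {Δ U V} : Repl S T U V → Repl S T (.seq Δ U) (.seq Δ V)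
  | seqMem {U V W} (Δ Γ) : Repl S T U V →
      Repl S T (.seq (Δ ++ U :: Γ) W) (.seq (Δ ++ V :: Γ) W)

/-!
The proof is by induction on the position of the replaced occurrence. At the occurrence itself the
four premises are the claim, and `−` merely swaps the positive and negative halves of `⇔ˢ`. What
remains is that `(Δ ⇒ U) ⇔ˢ (Δ' ⇒ V)` whenever `U ⇔ˢ V` and the antecedents `Δ`, `Δ'` derive each
other's members: `RI⁺`/`LI⁺` and `RI⁻`/`LI⁻` reduce this to sequents about `U`, `V`, `Δ`, `Δ'`,
once the structural rules let antecedents be treated as sets.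
-/

lemma rneg_rneg (S : RExpr) : rneg (rneg S) = S := by cases S <;> rfl

namespace SC

variable {P : Set RExpr}

lemma weaken_append {Δ : List RExpr} {S : RExpr} (Ξ : List RExpr) (h : SC P (.seq Δ S)) :
    SC P (.seq (Δ ++ Ξ) S) := by
  induction Ξ using List.reverseRecOn with
  | nil => simpa using h
  | append_singleton Ξ a ih => simpa using ih.wl a

lemma perm_append {S : RExpr} {l₁ l₂ : List RExpr} (p : l₁.Perm l₂) :
    ∀ Δ : List RExpr, SC P (.seq (Δ ++ l₁) S) → SC P (.seq (Δ ++ l₂) S) := by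
  induction p with
  | nil => exact fun _ h => h
  | cons a _ ih => exact fun Δ h => by simpa using ih (Δ ++ [a]) (by simpa using h)
  | swap x y l => exact fun Δ h => SC.pl Δ y x l h
  | trans _ _ ih₁ ih₂ => exact fun Δ h => ih₂ Δ (ih₁ Δ h)

lemma perm {S : RExpr} {l₁ l₂ : List RExpr} (p : l₁.Perm l₂) (h : SC P (.seq l₁ S)) :
    SC P (.seq l₂ S) :=
  perm_append p [] h

lemma contract_of_mem {Δ : List RExpr} {S e : RExpr} (he : e ∈ Δ)
    (h : SC P (.seq (Δ ++ [e]) S)) : SC P (.seq Δ S) := by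
  obtain ⟨Ξ, Θ, rfl⟩ := List.append_of_mem he
  have hΔ : (Ξ ++ e :: Θ).Perm (Ξ ++ Θ ++ [e]) := List.perm_middle.trans (List.perm_append_comm (l₁ := [e]))
  refine perm hΔ.symm (SC.cl (perm ?_ h))
  simpa using hΔ.append_right [e]

lemma of_subset {Δ Δ' : List RExpr} {S : RExpr} (hsub : Δ ⊆ Δ') (h : SC P (.seq Δ S)) :
    SC P (.seq Δ' S) := by
  have contract_suffix : ∀ Θ : List RExpr, Θ ⊆ Δ' → SC P (.seq (Δ' ++ Θ) S) →
      SC P (.seq Δ' S) := by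
    intro Θ
    induction Θ using List.reverseRecOn with
    | nil => intro _ h; simpa using h
    | append_singleton Θ a ih =>
        intro hΘ h
        have ha : a ∈ Δ' ++ Θ := List.mem_append_left Θ (hΘ (by simp))
        exact ih (fun x hx => hΘ (by simp [hx])) (contract_of_mem ha (by simpa using h))
  exact contract_suffix Δ hsub (perm List.perm_append_comm (weaken_append Δ' h))

lemma of_mem {Δ : List RExpr} {e : RExpr} (he : e ∈ Δ) : SC P (.seq Δ e) :=
  of_subset (by simpa using he) (SC.rf e)

lemma of_singleton_of_mem {Δ : List RExpr} {X Y : RExpr} (h : SC P (.seq [X] Y))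
    (hX : X ∈ Δ) : SC P (.seq Δ Y) :=
  SC.cut (of_mem hX) (of_subset (by simp) h)

lemma seq_seq {Ξ₁ Ξ₂ : List RExpr} {Y Z : RExpr}
    (h₁ : ∀ X ∈ Ξ₁, SC P (.seq Ξ₂ X)) (h₂ : SC P (.seq (Ξ₂ ++ [Y]) Z)) :
    SC P (.seq [.seq Ξ₁ Y] (.seq Ξ₂ Z)) :=
  SC.riP (of_subset (by simp) (SC.liP h₁ h₂))

lemma rneg_seq_rneg_seq {Ξ₁ Ξ₂ : List RExpr} {Y Z : RExpr}
    (h₁ : ∀ X ∈ Ξ₁, SC P (.seq Ξ₂ X)) (h₂ : SC P (.seq (Ξ₂ ++ [rneg Y]) (rneg Z))) :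
    SC P (.seq [rneg (.seq Ξ₁ Y)] (rneg (.seq Ξ₂ Z))) :=
  SC.riN (of_subset (by simp) (SC.liN h₁ h₂))

lemma mem_of_replace {Δ Γ : List RExpr} {U V : RExpr} (h : SC P (.seq [V] U)) :
    ∀ X ∈ Δ ++ U :: Γ, SC P (.seq (Δ ++ V :: Γ) X) := by
  intro X hX
  simp only [List.mem_append, List.mem_cons] at hX
  rcases hX with hX | rfl | hX
  · exact of_mem (by simp [hX])
  · exact of_singleton_of_mem h (by simp)
  · exact of_mem (by simp [hX])

end SC

namespace StrictEquiv

variable {P : Set RExpr}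

lemma refl (P : Set RExpr) (U : RExpr) : StrictEquiv P U U :=
  ⟨SC.rf U, SC.rf U, SC.rf _, SC.rf _⟩

lemma of_equivPrems (S T : RExpr) : StrictEquiv (equivPrems S T) S T := by
  refine ⟨SC.prem ?_, SC.prem ?_, SC.prem ?_, SC.prem ?_⟩ <;> simp [equivPrems]

lemma rneg {U V : RExpr} (h : StrictEquiv P U V) : StrictEquiv P (rneg U) (rneg V) := by
  obtain ⟨h₁, h₂, h₃, h₄⟩ := h
  exact ⟨h₃, h₄, by simpa [rneg_rneg] using h₁, by simpa [rneg_rneg] using h₂⟩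

lemma seq {Δ Δ' : List RExpr} {U V : RExpr} (hΔ : ∀ X ∈ Δ, SC P (.seq Δ' X))
    (hΔ' : ∀ X ∈ Δ', SC P (.seq Δ X)) (h : StrictEquiv P U V) :
    StrictEquiv P (.seq Δ U) (.seq Δ' V) := by
  obtain ⟨h₁, h₂, h₃, h₄⟩ := h
  exact ⟨SC.seq_seq hΔ (SC.of_singleton_of_mem h₁ (by simp)),
    SC.seq_seq hΔ' (SC.of_singleton_of_mem h₂ (by simp)),
    SC.rneg_seq_rneg_seq hΔ (SC.of_singleton_of_mem h₃ (by simp)),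
    SC.rneg_seq_rneg_seq hΔ' (SC.of_singleton_of_mem h₄ (by simp))⟩

end StrictEquiv

/-- Theorem 1 (substitution theorem for R-expressions):
`S ⇔ˢ T ⊢ U_S ⇔ˢ U_T`. -/
theorem substitution_R_expressions (S T US UT : RExpr) (h : Repl S T US UT) :
    StrictEquiv (equivPrems S T) US UT := by
  induction h with
  | here => exact StrictEquiv.of_equivPrems S T
  | neg _ ih => exact ih.rneg
  | seqSucc _ ih => exact StrictEquiv.seq (fun _ => SC.of_mem) (fun _ => SC.of_mem) ih
  | seqMem Δ Γ _ ih =>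
      exact StrictEquiv.seq (SC.mem_of_replace ih.2.1) (SC.mem_of_replace ih.1)
        (StrictEquiv.refl _ _)
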